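/- Let κ : (-1,1) → ℝ be continuous, κ ≤ 0, not identically zero, even, with |κ(u)| ≤ C(1-u²)^{α} for some α > 2. Define ω(y) := -∫_{-1}^{1} u² κ(u)/(1 - y u²) du for y ∈ [0,1] and κ₀² := -∫_{-1}^{1} u²κ(u)/(1-u²) du. Suppose x* : (0,κ₀] → ℝ is twice differentiable and satisfies, for every r ∈ (0,κ₀], the implicit equation x*(r) = ω(r²/x*(r)) with 0 ≤ r²/x*(r) ≤ 1. Then there exist positive constants c₀, C₀, c₁ (depending only on κ) such that for all r ∈ (0,κ₀]: (i) C₀^{-1} r ≤ x*'(r) ≤ C₀ r; (ii) C₀^{-1} ≤ x*''(r) ≤ C₀; (iii) 2 x*''(r) x*(r) - x*'(r)² ≥ c₁; and consequently τ*(r) := √(x*(r)) satisfies c₀ r ≤ τ*'(r) ≤ C₀ r and τ*''(r) ≥ c₁. -/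

import Mathlib

open MeasureTheory Real

noncomputable section

/-- `ω(y) = -∫_{-1}^{1} u² κ(u)/(1 - y u²) du`. -/
def omegaFn (κ : ℝ → ℝ) (y : ℝ) : ℝ :=
  -∫ u in (-1 : ℝ)..1, u ^ 2 * κ u / (1 - y * u ^ 2)

/-- `κ₀ = √(ω(1)) = √(-∫ u²κ(u)/(1-u²) du)`. -/
def kappa0 (κ : ℝ → ℝ) : ℝ := Real.sqrt (omegaFn κ 1)

namespace Stmt13

open MeasureTheory Set Real Filter Topology

lemma integrableOn_one_sub_sq_rpow {β : ℝ} (hβ : -1 < β) :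
    MeasureTheory.IntegrableOn (fun u : ℝ => (1 - u ^ 2) ^ β) (Set.Ioo (-1 : ℝ) 1) := by
  have hmeas : ContinuousOn (fun u : ℝ => (1 - u ^ 2) ^ β) (Set.Ioo (-1 : ℝ) 1) := by
    apply ContinuousOn.rpow_const (by fun_prop)
    intro u hu
    left
    nlinarith [hu.1, hu.2]
  have hAE : AEStronglyMeasurable (fun u : ℝ => (1 - u ^ 2) ^ β)
      (volume.restrict (Set.Ioo (-1 : ℝ) 1)) :=
    hmeas.aestronglyMeasurable measurableSet_Ioo
  have hsub1 : Set.Ioc (-1 : ℝ) 0 ⊆ Set.Ioo (-1 : ℝ) 1 :=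
    fun u hu => ⟨hu.1, by linarith [hu.2]⟩
  have hsub2 : Set.Ioo (0 : ℝ) 1 ⊆ Set.Ioo (-1 : ℝ) 1 :=
    fun u hu => ⟨by linarith [hu.1], hu.2⟩
  have hAE1 : AEStronglyMeasurable (fun u : ℝ => (1 - u ^ 2) ^ β)
      (volume.restrict (Set.Ioc (-1 : ℝ) 0)) :=
    hAE.mono_measure (Measure.restrict_mono hsub1 le_rfl)
  have hAE2 : AEStronglyMeasurable (fun u : ℝ => (1 - u ^ 2) ^ β)
      (volume.restrict (Set.Ioo (0 : ℝ) 1)) :=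
    hAE.mono_measure (Measure.restrict_mono hsub2 le_rfl)
  set M : ℝ := max 1 ((2:ℝ) ^ β) with hM
  have hM1 : (1:ℝ) ≤ M := le_max_left _ _
  have hM0 : 0 ≤ M := by linarith
  have key : ∀ u : ℝ, 0 ≤ u → u ≤ 1 → (1 - u ^ 2) ^ β ≤ M * (1 - u) ^ β := by
    intro u h0 h1
    rcases eq_or_ne β 0 with rfl | hβ0
    · simp only [Real.rpow_zero, mul_one]; exact hM1
    rcases eq_or_lt_of_le h1 with rfl | h1'
    · have : ((1:ℝ) - 1 ^ 2) = 0 := by norm_num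
      rw [this, Real.zero_rpow hβ0]
      have : ((1:ℝ) - 1) = 0 := by norm_num
      rw [this, Real.zero_rpow hβ0, mul_zero]
    have h2 : (1 - u^2 : ℝ) = (1-u) * (1+u) := by ring
    rw [h2, Real.mul_rpow (by linarith) (by linarith), mul_comm]
    apply mul_le_mul_of_nonneg_right _ (Real.rpow_nonneg (by linarith) _)
    rcases le_or_gt 0 β with hb | hb
    · calc (1+u) ^ β ≤ (2:ℝ)^β := Real.rpow_le_rpow (by linarith) (by linarith) hb
        _ ≤ M := le_max_right _ _
    · calc (1+u) ^ β ≤ 1 := Real.rpow_le_one_of_one_le_of_nonpos (by linarith) hb.le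
        _ ≤ M := le_max_left _ _
  have base : IntervalIntegrable (fun x : ℝ => x ^ β) volume 0 1 :=
    intervalIntegral.intervalIntegrable_rpow' hβ
  have refl1 : IntervalIntegrable (fun x : ℝ => (1 - x) ^ β) volume 0 1 := by
    have := (base.comp_sub_left 1).symm
    simpa using this
  have int1 : IntegrableOn (fun x : ℝ => (1 - x) ^ β) (Set.Ioc (0:ℝ) 1) := by
    rw [intervalIntegrable_iff_integrableOn_Ioc_of_le (by norm_num)] at refl1
    exact refl1
  have refl2 : IntervalIntegrable (fun x : ℝ => (1 + x) ^ β) volume (-1) 0 := by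
    have := base.comp_add_left 1
    have h' : IntervalIntegrable (fun x : ℝ => (1 + x) ^ β) volume (0 - 1) (1 - 1) := by
      simpa [add_comm] using this
    simpa using h'
  have int2 : IntegrableOn (fun x : ℝ => (1 + x) ^ β) (Set.Ioc (-1:ℝ) 0) := by
    rw [intervalIntegrable_iff_integrableOn_Ioc_of_le (by norm_num)] at refl2
    exact refl2
  have intM1 : IntegrableOn (fun x : ℝ => M * (1 - x) ^ β) (Set.Ioo (0:ℝ) 1) :=
    ((int1.mono_set Set.Ioo_subset_Ioc_self).const_mul M)
  have intM2 : IntegrableOn (fun x : ℝ => M * (1 + x) ^ β) (Set.Ioc (-1:ℝ) 0) :=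
    (int2.const_mul M)
  have hIoo : Set.Ioo (-1 : ℝ) 1 ⊆ Set.Ioc (-1 : ℝ) 0 ∪ Set.Ioo (0:ℝ) 1 := by
    intro u hu
    rcases le_or_gt u 0 with h | h
    · exact Or.inl ⟨hu.1, h⟩
    · exact Or.inr ⟨h, hu.2⟩
  apply MeasureTheory.IntegrableOn.mono_set _ hIoo
  apply MeasureTheory.IntegrableOn.union
  · apply Integrable.mono' intM2 hAE1
    filter_upwards [ae_restrict_mem measurableSet_Ioc] with u hu
    have h0 : (0:ℝ) ≤ 1 - u ^ 2 := by nlinarith [hu.1, hu.2]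
    rw [Real.norm_eq_abs, abs_of_nonneg (Real.rpow_nonneg h0 _)]
    have := key (-u) (by linarith [hu.2]) (by linarith [hu.1])
    have hrw : ((-u:ℝ)) ^ 2 = u ^ 2 := by ring
    rw [hrw] at this
    simpa [sub_neg_eq_add] using this
  · apply Integrable.mono' intM1 hAE2
    filter_upwards [ae_restrict_mem measurableSet_Ioo] with u hu
    have h0 : (0:ℝ) ≤ 1 - u ^ 2 := by nlinarith [hu.1, hu.2]
    rw [Real.norm_eq_abs, abs_of_nonneg (Real.rpow_nonneg h0 _)]
    exact key u hu.1.le hu.2.le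

noncomputable def Fn (κ : ℝ → ℝ) (n : ℕ) (y u : ℝ) : ℝ :=
  (u ^ 2) ^ n * (-κ u) / (1 - y * u ^ 2) ^ n

noncomputable def Wn (κ : ℝ → ℝ) (n : ℕ) (y : ℝ) : ℝ :=
  ∫ u in Set.Ioo (-1:ℝ) 1, Fn κ n y u

variable {C α : ℝ} {κ : ℝ → ℝ}

lemma denom_pos {y u : ℝ} (hy : y ∈ Set.Icc (0:ℝ) 1) (hu : u ∈ Set.Ioo (-1:ℝ) 1) :
    0 < 1 - y * u ^ 2 := by
  have h1 : u ^ 2 < 1 := by nlinarith [hu.1, hu.2]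
  have h2 : 0 ≤ u ^ 2 := sq_nonneg u
  nlinarith [hy.1, hy.2]

lemma denom_ge {y u : ℝ} (hy : y ∈ Set.Icc (0:ℝ) 1) (hu : u ∈ Set.Ioo (-1:ℝ) 1) :
    1 - u ^ 2 ≤ 1 - y * u ^ 2 := by
  nlinarith [hy.2, sq_nonneg u]

lemma Fn_contOn (hcont : ContinuousOn κ (Set.Ioo (-1 : ℝ) 1)) (n : ℕ) {y : ℝ}
    (hy : y ∈ Set.Icc (0:ℝ) 1) :
    ContinuousOn (Fn κ n y) (Set.Ioo (-1:ℝ) 1) := by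
  apply ContinuousOn.div
  · exact (by fun_prop : ContinuousOn (fun u : ℝ => (u^2)^n) _).mul hcont.neg
  · fun_prop
  · intro u hu
    exact pow_ne_zero _ (ne_of_gt (denom_pos hy hu))

lemma Fn_bound (hα : 2 < α) (hC : 0 ≤ C)
    (hbound : ∀ u ∈ Set.Ioo (-1 : ℝ) 1, |κ u| ≤ C * (1 - u ^ 2) ^ α)
    {n : ℕ} (hn : n ≤ 3) {y : ℝ} (hy : y ∈ Set.Icc (0:ℝ) 1)
    {u : ℝ} (hu : u ∈ Set.Ioo (-1:ℝ) 1) :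
    ‖Fn κ n y u‖ ≤ C * (1 - u ^ 2) ^ (α - 3) := by
  have h1 : (0:ℝ) < 1 - u ^ 2 := by nlinarith [hu.1, hu.2]
  have h2 : u ^ 2 ≤ 1 := by nlinarith
  have hd := denom_pos hy hu
  have hdge := denom_ge hy hu
  have habs : ‖Fn κ n y u‖ = (u ^ 2) ^ n * |κ u| / (1 - y * u ^ 2) ^ n := by
    rw [Fn, Real.norm_eq_abs, abs_div, abs_mul, abs_neg,
      abs_of_nonneg (pow_nonneg (sq_nonneg u) n),
      abs_of_nonneg (pow_nonneg hd.le n)]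
  rw [habs]
  have step1 : (u ^ 2) ^ n * |κ u| / (1 - y * u ^ 2) ^ n
      ≤ 1 * (C * (1 - u ^ 2) ^ α) / (1 - u ^ 2) ^ n := by
    gcongr
    · exact pow_le_one₀ (sq_nonneg u) h2
    · exact hbound u hu
  have step2 : 1 * (C * (1 - u ^ 2) ^ α) / (1 - u ^ 2) ^ n
      = C * (1 - u ^ 2) ^ (α - (n:ℝ)) := by
    rw [one_mul, ← Real.rpow_natCast (1 - u ^ 2) n, mul_div_assoc,
      ← Real.rpow_sub h1]
  have step3 : C * (1 - u ^ 2) ^ (α - (n:ℝ)) ≤ C * (1 - u ^ 2) ^ (α - 3) := by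
    apply mul_le_mul_of_nonneg_left _ hC
    apply Real.rpow_le_rpow_of_exponent_ge h1 (by nlinarith [sq_nonneg u])
    have : (n:ℝ) ≤ 3 := by exact_mod_cast hn
    linarith
  linarith

lemma integrable_aux (hα : 2 < α) {h : ℝ → ℝ} {K : ℝ}
    (hc : ContinuousOn h (Set.Ioo (-1:ℝ) 1))
    (hb : ∀ u ∈ Set.Ioo (-1:ℝ) 1, ‖h u‖ ≤ K * (1 - u ^ 2) ^ (α - 3)) :
    IntegrableOn h (Set.Ioo (-1:ℝ) 1) := by
  have hint : IntegrableOn (fun u : ℝ => K * (1 - u ^ 2) ^ (α - 3)) (Set.Ioo (-1:ℝ) 1) :=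
    (integrableOn_one_sub_sq_rpow (by linarith)).const_mul K
  apply Integrable.mono' hint (hc.aestronglyMeasurable measurableSet_Ioo)
  filter_upwards [ae_restrict_mem measurableSet_Ioo] with u hu
  exact hb u hu

lemma Fn_integrable (hα : 2 < α) (hC : 0 ≤ C)
    (hcont : ContinuousOn κ (Set.Ioo (-1 : ℝ) 1))
    (hbound : ∀ u ∈ Set.Ioo (-1 : ℝ) 1, |κ u| ≤ C * (1 - u ^ 2) ^ α)
    {n : ℕ} (hn : n ≤ 3) {y : ℝ} (hy : y ∈ Set.Icc (0:ℝ) 1) :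
    IntegrableOn (Fn κ n y) (Set.Ioo (-1:ℝ) 1) :=
  integrable_aux hα (Fn_contOn hcont n hy) (fun u hu => Fn_bound hα hC hbound hn hy hu)

lemma Fn_nonneg (hneg : ∀ u ∈ Set.Ioo (-1 : ℝ) 1, κ u ≤ 0) (n : ℕ) {y : ℝ}
    (hy : y ∈ Set.Icc (0:ℝ) 1) {u : ℝ} (hu : u ∈ Set.Ioo (-1:ℝ) 1) :
    0 ≤ Fn κ n y u := by
  apply div_nonneg
  · exact mul_nonneg (pow_nonneg (sq_nonneg u) n) (by linarith [hneg u hu])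
  · exact pow_nonneg (denom_pos hy hu).le n

lemma Wn_nonneg (hneg : ∀ u ∈ Set.Ioo (-1 : ℝ) 1, κ u ≤ 0) (n : ℕ) {y : ℝ}
    (hy : y ∈ Set.Icc (0:ℝ) 1) : 0 ≤ Wn κ n y := by
  apply MeasureTheory.setIntegral_nonneg measurableSet_Ioo
  exact fun u hu => Fn_nonneg hneg n hy hu

lemma Wn_mono (hα : 2 < α) (hC : 0 ≤ C)
    (hcont : ContinuousOn κ (Set.Ioo (-1 : ℝ) 1))
    (hneg : ∀ u ∈ Set.Ioo (-1 : ℝ) 1, κ u ≤ 0)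
    (hbound : ∀ u ∈ Set.Ioo (-1 : ℝ) 1, |κ u| ≤ C * (1 - u ^ 2) ^ α)
    {n : ℕ} (hn : n ≤ 3) {y y' : ℝ} (hy : y ∈ Set.Icc (0:ℝ) 1)
    (hy' : y' ∈ Set.Icc (0:ℝ) 1) (hyy : y ≤ y') :
    Wn κ n y ≤ Wn κ n y' := by
  apply MeasureTheory.setIntegral_mono_on
    (Fn_integrable hα hC hcont hbound hn hy)
    (Fn_integrable hα hC hcont hbound hn hy') measurableSet_Ioo
  intro u hu
  have hnum : 0 ≤ (u ^ 2) ^ n * (-κ u) :=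
    mul_nonneg (pow_nonneg (sq_nonneg u) n) (by linarith [hneg u hu])
  have h1 : 0 < (1 - y' * u ^ 2) ^ n := pow_pos (denom_pos hy' hu) n
  have h2 : (1 - y' * u ^ 2) ^ n ≤ (1 - y * u ^ 2) ^ n := by
    apply pow_le_pow_left₀ (denom_pos hy' hu).le
    nlinarith [sq_nonneg u]
  exact div_le_div_of_nonneg_left hnum h1 h2

/-- positivity of the moments at `y = 0`. -/
lemma Wn_pos (hα : 2 < α) (hC : 0 ≤ C)
    (hcont : ContinuousOn κ (Set.Ioo (-1 : ℝ) 1))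
    (hneg : ∀ u ∈ Set.Ioo (-1 : ℝ) 1, κ u ≤ 0)
    (hne : ∃ u₀ ∈ Set.Ioo (-1 : ℝ) 1, κ u₀ ≠ 0)
    (hbound : ∀ u ∈ Set.Ioo (-1 : ℝ) 1, |κ u| ≤ C * (1 - u ^ 2) ^ α)
    {n : ℕ} (hn : n ≤ 3) : 0 < Wn κ n 0 := by
  obtain ⟨u₀, hu₀, hκ0⟩ := hne
  have hκneg : κ u₀ < 0 := lt_of_le_of_ne (hneg u₀ hu₀) hκ0
  have hc : ContinuousAt κ u₀ := hcont.continuousAt (isOpen_Ioo.mem_nhds hu₀)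
  have hev : κ ⁻¹' (Set.Iio 0) ∈ 𝓝 u₀ := hc (Iio_mem_nhds hκneg)
  obtain ⟨δ, δpos, hball⟩ := Metric.mem_nhds_iff.mp
    (Filter.inter_mem hev (isOpen_Ioo.mem_nhds hu₀))
  have h0Icc : (0:ℝ) ∈ Set.Icc (0:ℝ) 1 := by norm_num
  rw [Wn, MeasureTheory.setIntegral_pos_iff_support_of_nonneg_ae]
  · apply lt_of_lt_of_le _ (measure_mono (show Metric.ball u₀ δ \ {0} ⊆
      (Function.support (Fn κ n 0)) ∩ Set.Ioo (-1:ℝ) 1 from ?_))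
    · rw [measure_diff_null (measure_singleton 0)]
      exact Metric.measure_ball_pos volume u₀ δpos
    · intro u hu
      obtain ⟨hub, hu0⟩ := hu
      have h1 := hball hub
      have hκu : κ u < 0 := h1.1
      have huIoo : u ∈ Set.Ioo (-1:ℝ) 1 := h1.2
      refine ⟨?_, huIoo⟩
      simp only [Function.mem_support, Fn]
      have : (1 - 0 * u ^ 2) ^ n = 1 := by norm_num
      rw [this, div_one]
      have hu0' : u ≠ 0 := by simpa using hu0
      have hu2 : 0 < u ^ 2 := lt_of_le_of_ne (sq_nonneg u) (Ne.symm (pow_ne_zero 2 hu0'))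
      exact ne_of_gt (mul_pos (pow_pos hu2 n) (by linarith))
  · filter_upwards [ae_restrict_mem measurableSet_Ioo] with u hu
    exact Fn_nonneg hneg n h0Icc hu
  · exact Fn_integrable hα hC hcont hbound hn h0Icc

/-- derivative of `ω = Wn 1`. -/
lemma W1_hasDeriv (hα : 2 < α) (hC : 0 ≤ C)
    (hcont : ContinuousOn κ (Set.Ioo (-1 : ℝ) 1))
    (hbound : ∀ u ∈ Set.Ioo (-1 : ℝ) 1, |κ u| ≤ C * (1 - u ^ 2) ^ α)
    {y₀ : ℝ} (hy₀ : y₀ ∈ Set.Icc (0:ℝ) 1) :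
    HasDerivWithinAt (Wn κ 1) (Wn κ 2 y₀) (Set.Icc (0:ℝ) 1) y₀ := by
  rw [hasDerivWithinAt_iff_tendsto_slope]
  set S : ℝ → ℝ → ℝ := fun y u =>
    (u ^ 2) ^ 2 * (-κ u) / ((1 - y * u ^ 2) * (1 - y₀ * u ^ 2)) with hS
  have hScont : ∀ y ∈ Set.Icc (0:ℝ) 1, ContinuousOn (S y) (Set.Ioo (-1:ℝ) 1) := by
    intro y hy
    apply ContinuousOn.div
    · exact (by fun_prop : ContinuousOn (fun u:ℝ => (u^2)^2) _).mul hcont.neg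
    · fun_prop
    · intro u hu
      exact ne_of_gt (mul_pos (denom_pos hy hu) (denom_pos hy₀ hu))
  have hSbound : ∀ y ∈ Set.Icc (0:ℝ) 1, ∀ u ∈ Set.Ioo (-1:ℝ) 1,
      ‖S y u‖ ≤ C * (1 - u ^ 2) ^ (α - 3) := by
    intro y hy u hu
    have h1 : (0:ℝ) < 1 - u ^ 2 := by nlinarith [hu.1, hu.2]
    have ha := denom_pos hy hu
    have hb := denom_pos hy₀ hu
    have hage := denom_ge hy hu
    have hbge := denom_ge hy₀ hu
    have habs : ‖S y u‖ = (u ^ 2) ^ 2 * |κ u| / ((1 - y * u ^ 2) * (1 - y₀ * u ^ 2)) := by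
      rw [hS, Real.norm_eq_abs, abs_div, abs_mul, abs_neg,
        abs_of_nonneg (pow_nonneg (sq_nonneg u) 2),
        abs_of_nonneg (mul_pos ha hb).le]
    rw [habs]
    have step1 : (u ^ 2) ^ 2 * |κ u| / ((1 - y * u ^ 2) * (1 - y₀ * u ^ 2))
        ≤ 1 * (C * (1 - u ^ 2) ^ α) / ((1 - u ^ 2) * (1 - u ^ 2)) := by
      gcongr
      · exact pow_le_one₀ (sq_nonneg u) (by nlinarith)
      · exact hbound u hu
    have step2 : 1 * (C * (1 - u ^ 2) ^ α) / ((1 - u ^ 2) * (1 - u ^ 2))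
        = C * (1 - u ^ 2) ^ (α - 2) := by
      rw [one_mul, mul_div_assoc]
      congr 1
      rw [show (1 - u^2) * (1 - u^2) = (1-u^2)^(2:ℕ) by ring,
        ← Real.rpow_natCast (1 - u ^ 2) 2, ← Real.rpow_sub h1]
      norm_num
    have step3 : C * (1 - u ^ 2) ^ (α - 2) ≤ C * (1 - u ^ 2) ^ (α - 3) := by
      apply mul_le_mul_of_nonneg_left _ hC
      exact Real.rpow_le_rpow_of_exponent_ge h1 (by nlinarith [sq_nonneg u]) (by linarith)
    linarith
  have hSint : ∀ y ∈ Set.Icc (0:ℝ) 1, IntegrableOn (S y) (Set.Ioo (-1:ℝ) 1) := by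
    intro y hy
    exact integrable_aux hα (hScont y hy) (hSbound y hy)
  -- the slope equals the integral of S y
  have key1 : ∀ y ∈ Set.Icc (0:ℝ) 1 \ {y₀},
      slope (Wn κ 1) y₀ y = ∫ u in Set.Ioo (-1:ℝ) 1, S y u := by
    intro y hy
    obtain ⟨hyI, hyne⟩ := hy
    have hyne' : y - y₀ ≠ 0 := sub_ne_zero.mpr hyne
    rw [slope_def_field, div_eq_inv_mul, ← smul_eq_mul, Wn, Wn,
      ← MeasureTheory.integral_sub (Fn_integrable hα hC hcont hbound (by norm_num) hyI)
        (Fn_integrable hα hC hcont hbound (by norm_num) hy₀),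
      ← MeasureTheory.integral_smul]
    apply MeasureTheory.setIntegral_congr_fun measurableSet_Ioo
    intro u hu
    have ha := denom_pos hyI hu
    have hb := denom_pos hy₀ hu
    simp only [smul_eq_mul, Fn, hS]
    rw [pow_one, pow_one]
    field_simp
    ring
  -- tendsto of the S-integrals
  have key0 : Wn κ 2 y₀ = ∫ u in Set.Ioo (-1:ℝ) 1, S y₀ u := by
    rw [Wn]
    apply MeasureTheory.setIntegral_congr_fun measurableSet_Ioo
    intro u hu
    simp only [Fn, hS]
    ring_nf
  have key2 : Tendsto (fun y => ∫ u in Set.Ioo (-1:ℝ) 1, S y u)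
      (𝓝[Set.Icc (0:ℝ) 1 \ {y₀}] y₀) (𝓝 (Wn κ 2 y₀)) := by
    rw [key0]
    apply MeasureTheory.tendsto_integral_filter_of_dominated_convergence
      (fun u => C * (1 - u ^ 2) ^ (α - 3))
    · filter_upwards [eventually_mem_nhdsWithin] with y hy
      exact ((hScont y hy.1).aestronglyMeasurable measurableSet_Ioo)
    · filter_upwards [eventually_mem_nhdsWithin] with y hy
      filter_upwards [ae_restrict_mem measurableSet_Ioo] with u hu
      exact hSbound y hy.1 u hu
    · exact (integrableOn_one_sub_sq_rpow (by linarith)).const_mul C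
    · filter_upwards [ae_restrict_mem measurableSet_Ioo] with u hu
      have hb := denom_pos hy₀ hu
      have hca : ContinuousAt (fun y => S y u) y₀ := by
        apply ContinuousAt.div
        · fun_prop
        · fun_prop
        · exact ne_of_gt (mul_pos hb hb)
      exact hca.tendsto.mono_left nhdsWithin_le_nhds
  exact key2.congr' (by
    filter_upwards [eventually_mem_nhdsWithin] with y hy
    exact (key1 y hy).symm)

/-- derivative of `ω' = Wn 2`: it is `2 * Wn 3`. -/
lemma W2_hasDeriv (hα : 2 < α) (hC : 0 ≤ C)
    (hcont : ContinuousOn κ (Set.Ioo (-1 : ℝ) 1))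
    (hbound : ∀ u ∈ Set.Ioo (-1 : ℝ) 1, |κ u| ≤ C * (1 - u ^ 2) ^ α)
    {y₀ : ℝ} (hy₀ : y₀ ∈ Set.Icc (0:ℝ) 1) :
    HasDerivWithinAt (Wn κ 2) (2 * Wn κ 3 y₀) (Set.Icc (0:ℝ) 1) y₀ := by
  rw [hasDerivWithinAt_iff_tendsto_slope]
  set S : ℝ → ℝ → ℝ := fun y u =>
    (u ^ 2) ^ 3 * (-κ u) * (1 / ((1 - y * u ^ 2) * (1 - y₀ * u ^ 2) ^ 2)
      + 1 / ((1 - y * u ^ 2) ^ 2 * (1 - y₀ * u ^ 2))) with hS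
  have hScont : ∀ y ∈ Set.Icc (0:ℝ) 1, ContinuousOn (S y) (Set.Ioo (-1:ℝ) 1) := by
    intro y hy
    apply ContinuousOn.mul
    · exact (by fun_prop : ContinuousOn (fun u:ℝ => (u^2)^3) _).mul hcont.neg
    · apply ContinuousOn.add
      · apply ContinuousOn.div (by fun_prop) (by fun_prop)
        intro u hu
        exact ne_of_gt (mul_pos (denom_pos hy hu) (pow_pos (denom_pos hy₀ hu) 2))
      · apply ContinuousOn.div (by fun_prop) (by fun_prop)
        intro u hu
        exact ne_of_gt (mul_pos (pow_pos (denom_pos hy hu) 2) (denom_pos hy₀ hu))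
  have hSbound : ∀ y ∈ Set.Icc (0:ℝ) 1, ∀ u ∈ Set.Ioo (-1:ℝ) 1,
      ‖S y u‖ ≤ (2*C) * (1 - u ^ 2) ^ (α - 3) := by
    intro y hy u hu
    have h1 : (0:ℝ) < 1 - u ^ 2 := by nlinarith [hu.1, hu.2]
    have ha := denom_pos hy hu
    have hb := denom_pos hy₀ hu
    have hage := denom_ge hy hu
    have hbge := denom_ge hy₀ hu
    have hsum : 0 < 1 / ((1 - y * u ^ 2) * (1 - y₀ * u ^ 2) ^ 2)
        + 1 / ((1 - y * u ^ 2) ^ 2 * (1 - y₀ * u ^ 2)) := by positivity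
    have habs : ‖S y u‖ = (u ^ 2) ^ 3 * |κ u| * (1 / ((1 - y * u ^ 2) * (1 - y₀ * u ^ 2) ^ 2)
        + 1 / ((1 - y * u ^ 2) ^ 2 * (1 - y₀ * u ^ 2))) := by
      rw [hS, Real.norm_eq_abs, abs_mul, abs_mul, abs_neg,
        abs_of_nonneg (pow_nonneg (sq_nonneg u) 3), abs_of_pos hsum]
    rw [habs]
    have hcube1 : (1 - u ^ 2) ^ 3 ≤ (1 - y * u ^ 2) * (1 - y₀ * u ^ 2) ^ 2 := by
      calc (1 - u ^ 2) ^ 3 = (1 - u ^ 2) * (1 - u ^ 2) ^ 2 := by ring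
        _ ≤ (1 - y * u ^ 2) * (1 - y₀ * u ^ 2) ^ 2 := by
            apply mul_le_mul hage (pow_le_pow_left₀ h1.le hbge 2)
              (pow_nonneg h1.le 2) ha.le
    have hcube2 : (1 - u ^ 2) ^ 3 ≤ (1 - y * u ^ 2) ^ 2 * (1 - y₀ * u ^ 2) := by
      calc (1 - u ^ 2) ^ 3 = (1 - u ^ 2) ^ 2 * (1 - u ^ 2) := by ring
        _ ≤ (1 - y * u ^ 2) ^ 2 * (1 - y₀ * u ^ 2) := by
            apply mul_le_mul (pow_le_pow_left₀ h1.le hage 2) hbge h1.le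
              (pow_nonneg ha.le 2)
    have step1 : (u ^ 2) ^ 3 * |κ u| * (1 / ((1 - y * u ^ 2) * (1 - y₀ * u ^ 2) ^ 2)
        + 1 / ((1 - y * u ^ 2) ^ 2 * (1 - y₀ * u ^ 2)))
        ≤ 1 * (C * (1 - u ^ 2) ^ α) * (2 / (1 - u ^ 2) ^ 3) := by
      have e1 : 1 / ((1 - y * u ^ 2) * (1 - y₀ * u ^ 2) ^ 2) ≤ 1 / (1 - u ^ 2) ^ 3 :=
        one_div_le_one_div_of_le (pow_pos h1 3) hcube1
      have e2 : 1 / ((1 - y * u ^ 2) ^ 2 * (1 - y₀ * u ^ 2)) ≤ 1 / (1 - u ^ 2) ^ 3 :=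
        one_div_le_one_div_of_le (pow_pos h1 3) hcube2
      have e3 : (1 / ((1 - y * u ^ 2) * (1 - y₀ * u ^ 2) ^ 2)
          + 1 / ((1 - y * u ^ 2) ^ 2 * (1 - y₀ * u ^ 2))) ≤ 2 / (1 - u ^ 2) ^ 3 := by
        have : (2:ℝ) / (1 - u ^ 2) ^ 3 = 1 / (1 - u ^ 2) ^ 3 + 1 / (1 - u ^ 2) ^ 3 := by ring
        rw [this]; exact add_le_add e1 e2
      apply mul_le_mul _ e3 hsum.le (by positivity)
      apply mul_le_mul (pow_le_one₀ (sq_nonneg u) (by nlinarith)) (hbound u hu)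
        (abs_nonneg _) (by norm_num)
    have step2 : 1 * (C * (1 - u ^ 2) ^ α) * (2 / (1 - u ^ 2) ^ 3)
        = (2*C) * (1 - u ^ 2) ^ (α - 3) := by
      rw [one_mul]
      rw [show (α : ℝ) - 3 = α - (3:ℕ) by norm_num,
        Real.rpow_sub h1, Real.rpow_natCast]
      field_simp
    linarith
  have hSint : ∀ y ∈ Set.Icc (0:ℝ) 1, IntegrableOn (S y) (Set.Ioo (-1:ℝ) 1) := by
    intro y hy
    exact integrable_aux hα (hScont y hy) (hSbound y hy)
  have key1 : ∀ y ∈ Set.Icc (0:ℝ) 1 \ {y₀},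
      slope (Wn κ 2) y₀ y = ∫ u in Set.Ioo (-1:ℝ) 1, S y u := by
    intro y hy
    obtain ⟨hyI, hyne⟩ := hy
    have hyne' : y - y₀ ≠ 0 := sub_ne_zero.mpr (by simpa using hyne)
    rw [slope_def_field, div_eq_inv_mul, ← smul_eq_mul, Wn, Wn,
      ← MeasureTheory.integral_sub (Fn_integrable hα hC hcont hbound (by norm_num) hyI)
        (Fn_integrable hα hC hcont hbound (by norm_num) hy₀),
      ← MeasureTheory.integral_smul]
    apply MeasureTheory.setIntegral_congr_fun measurableSet_Ioo
    intro u hu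
    have ha := denom_pos hyI hu
    have hb := denom_pos hy₀ hu
    simp only [smul_eq_mul, Fn, hS]
    field_simp
    ring
  have key0 : 2 * Wn κ 3 y₀ = ∫ u in Set.Ioo (-1:ℝ) 1, S y₀ u := by
    rw [Wn, ← MeasureTheory.integral_const_mul]
    apply MeasureTheory.setIntegral_congr_fun measurableSet_Ioo
    intro u hu
    have hb := denom_pos hy₀ hu
    simp only [Fn, hS]
    field_simp
    ring
  have key2 : Tendsto (fun y => ∫ u in Set.Ioo (-1:ℝ) 1, S y u)
      (𝓝[Set.Icc (0:ℝ) 1 \ {y₀}] y₀) (𝓝 (2 * Wn κ 3 y₀)) := by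
    rw [key0]
    apply MeasureTheory.tendsto_integral_filter_of_dominated_convergence
      (fun u => (2*C) * (1 - u ^ 2) ^ (α - 3))
    · filter_upwards [eventually_mem_nhdsWithin] with y hy
      exact ((hScont y hy.1).aestronglyMeasurable measurableSet_Ioo)
    · filter_upwards [eventually_mem_nhdsWithin] with y hy
      filter_upwards [ae_restrict_mem measurableSet_Ioo] with u hu
      exact hSbound y hy.1 u hu
    · exact (integrableOn_one_sub_sq_rpow (by linarith)).const_mul _
    · filter_upwards [ae_restrict_mem measurableSet_Ioo] with u hu
      have hb := denom_pos hy₀ hu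
      have hca : ContinuousAt (fun y => S y u) y₀ := by
        apply ContinuousAt.mul (by fun_prop)
        apply ContinuousAt.add
        · exact ContinuousAt.div (by fun_prop) (by fun_prop)
            (ne_of_gt (mul_pos hb (pow_pos hb 2)))
        · exact ContinuousAt.div (by fun_prop) (by fun_prop)
            (ne_of_gt (mul_pos (pow_pos hb 2) hb))
      exact hca.tendsto.mono_left nhdsWithin_le_nhds
  exact key2.congr' (by
    filter_upwards [eventually_mem_nhdsWithin] with y hy
    exact (key1 y hy).symm)

/-- Cauchy–Schwarz: `(Wn 2)² ≤ Wn 1 * Wn 3`. -/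
lemma W_CS (hα : 2 < α) (hC : 0 ≤ C)
    (hcont : ContinuousOn κ (Set.Ioo (-1 : ℝ) 1))
    (hneg : ∀ u ∈ Set.Ioo (-1 : ℝ) 1, κ u ≤ 0)
    (hbound : ∀ u ∈ Set.Ioo (-1 : ℝ) 1, |κ u| ≤ C * (1 - u ^ 2) ^ α)
    {y : ℝ} (hy : y ∈ Set.Icc (0:ℝ) 1) (hW1pos : 0 < Wn κ 1 y) :
    (Wn κ 2 y) ^ 2 ≤ Wn κ 1 y * Wn κ 3 y := by
  set t : ℝ := Wn κ 2 y / Wn κ 1 y with ht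
  have i1 := Fn_integrable hα hC hcont hbound (show 1 ≤ 3 by norm_num) hy
  have i2 := Fn_integrable hα hC hcont hbound (show 2 ≤ 3 by norm_num) hy
  have i3 := Fn_integrable hα hC hcont hbound (show 3 ≤ 3 by norm_num) hy
  have key : 0 ≤ t^2 * Wn κ 1 y - 2*t*Wn κ 2 y + Wn κ 3 y := by
    have hlin : t^2 * Wn κ 1 y - 2*t*Wn κ 2 y + Wn κ 3 y
        = ∫ u in Set.Ioo (-1:ℝ) 1,
            (t^2 * Fn κ 1 y u - 2*t*Fn κ 2 y u + Fn κ 3 y u) := by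
      rw [Wn, Wn, Wn, ← MeasureTheory.integral_const_mul, ← MeasureTheory.integral_const_mul,
        ← MeasureTheory.integral_sub (i1.const_mul _) (i2.const_mul _)]
      exact (MeasureTheory.integral_add ((i1.const_mul (t^2)).sub (i2.const_mul (2*t))) i3).symm
    rw [hlin]
    apply MeasureTheory.setIntegral_nonneg measurableSet_Ioo
    intro u hu
    have hd := denom_pos hy hu
    have hκ : 0 ≤ -κ u := by linarith [hneg u hu]
    have hident : t^2 * Fn κ 1 y u - 2*t*Fn κ 2 y u + Fn κ 3 y u
        = u^2 * (-κ u) * (t*(1 - y*u^2) - u^2)^2 / (1 - y*u^2)^3 := by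
      simp only [Fn]
      field_simp
      ring
    rw [hident]
    positivity
  have htW1 : t * Wn κ 1 y = Wn κ 2 y := div_mul_cancel₀ _ (ne_of_gt hW1pos)
  have h2 : 0 ≤ Wn κ 1 y * (t^2 * Wn κ 1 y - 2*t*Wn κ 2 y + Wn κ 3 y) :=
    mul_nonneg hW1pos.le key
  nlinarith [h2, htW1]

lemma omega_eq (κ : ℝ → ℝ) (y : ℝ) : omegaFn κ y = Wn κ 1 y := by
  rw [omegaFn, Wn, intervalIntegral.integral_of_le (by norm_num : (-1:ℝ) ≤ (1:ℝ)),
    MeasureTheory.integral_Ioc_eq_integral_Ioo, ← MeasureTheory.integral_neg]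
  apply MeasureTheory.setIntegral_congr_fun measurableSet_Ioo
  intro u hu
  rw [Fn, pow_one, pow_one]
  ring

end Stmt13

open Stmt13 in
set_option maxHeartbeats 4000000 in
/-- dispersive properties (non-degeneracy of the Hessian) of the electric
dispersion relation `τ*(r) = √(x*(r))`. -/
theorem stmt13
    (C α : ℝ) (hα : 2 < α) (κ : ℝ → ℝ)
    (hcont : ContinuousOn κ (Set.Ioo (-1 : ℝ) 1))
    (hneg : ∀ u ∈ Set.Ioo (-1 : ℝ) 1, κ u ≤ 0)
    (hne : ∃ u₀ ∈ Set.Ioo (-1 : ℝ) 1, κ u₀ ≠ 0)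
    (heven : ∀ u ∈ Set.Ioo (-1 : ℝ) 1, κ (-u) = κ u)
    (hbound : ∀ u ∈ Set.Ioo (-1 : ℝ) 1, |κ u| ≤ C * (1 - u ^ 2) ^ α)
    (xs xs' xs'' : ℝ → ℝ)
    (hD1 : ∀ r ∈ Set.Ioc 0 (kappa0 κ), HasDerivWithinAt xs (xs' r) (Set.Ioc 0 (kappa0 κ)) r)
    (hD2 : ∀ r ∈ Set.Ioc 0 (kappa0 κ), HasDerivWithinAt xs' (xs'' r) (Set.Ioc 0 (kappa0 κ)) r)
    (heq : ∀ r ∈ Set.Ioc 0 (kappa0 κ),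
      xs r = omegaFn κ (r ^ 2 / xs r) ∧ 0 ≤ r ^ 2 / xs r ∧ r ^ 2 / xs r ≤ 1) :
    ∃ c₀ C₀ c₁ : ℝ, 0 < c₀ ∧ 0 < C₀ ∧ 0 < c₁ ∧
      (∀ r ∈ Set.Ioc 0 (kappa0 κ),
        C₀⁻¹ * r ≤ xs' r ∧ xs' r ≤ C₀ * r ∧
        C₀⁻¹ ≤ xs'' r ∧ xs'' r ≤ C₀ ∧
        c₁ ≤ 2 * xs'' r * xs r - xs' r ^ 2) ∧
      ∃ ts' ts'' : ℝ → ℝ,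
        ∀ r ∈ Set.Ioc 0 (kappa0 κ),
          HasDerivWithinAt (fun ρ => Real.sqrt (xs ρ)) (ts' r) (Set.Ioc 0 (kappa0 κ)) r ∧
          HasDerivWithinAt ts' (ts'' r) (Set.Ioc 0 (kappa0 κ)) r ∧
          c₀ * r ≤ ts' r ∧ ts' r ≤ C₀ * r ∧ c₁ ≤ ts'' r := by
  classical
  obtain ⟨u₀, hu₀, hκ0⟩ := hne
  have hne' : ∃ u₀ ∈ Set.Ioo (-1:ℝ) 1, κ u₀ ≠ 0 := ⟨u₀, hu₀, hκ0⟩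
  have hC : 0 ≤ C := by
    have h1 : (0:ℝ) < (1 - u₀ ^ 2) ^ α :=
      Real.rpow_pos_of_pos (by nlinarith [hu₀.1, hu₀.2]) α
    have h2 := hbound u₀ hu₀
    have h3 : 0 < |κ u₀| := abs_pos.mpr hκ0
    nlinarith
  have h0I : (0:ℝ) ∈ Set.Icc (0:ℝ) 1 := by norm_num
  have h1I : (1:ℝ) ∈ Set.Icc (0:ℝ) 1 := by norm_num
  obtain ⟨a, ha_def⟩ : ∃ a, a = Wn κ 1 0 := ⟨_, rfl⟩
  obtain ⟨b, hb_def⟩ : ∃ b, b = Wn κ 1 1 := ⟨_, rfl⟩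
  obtain ⟨m1, hm1_def⟩ : ∃ m1, m1 = Wn κ 2 0 := ⟨_, rfl⟩
  obtain ⟨M1, hM1_def⟩ : ∃ M1, M1 = Wn κ 2 1 := ⟨_, rfl⟩
  obtain ⟨U3, hU3_def⟩ : ∃ U3, U3 = Wn κ 3 1 := ⟨_, rfl⟩
  have hapos : 0 < a := by rw [ha_def]; exact Wn_pos hα hC hcont hneg hne' hbound (by norm_num)
  have hm1pos : 0 < m1 := by rw [hm1_def]; exact Wn_pos hα hC hcont hneg hne' hbound (by norm_num)
  have hab : a ≤ b := by
    rw [ha_def, hb_def]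
    exact Wn_mono hα hC hcont hneg hbound (by norm_num) h0I h1I (by norm_num)
  have hbpos : 0 < b := lt_of_lt_of_le hapos hab
  have hM1 : m1 ≤ M1 := by
    rw [hm1_def, hM1_def]
    exact Wn_mono hα hC hcont hneg hbound (by norm_num) h0I h1I (by norm_num)
  have hM1pos : 0 < M1 := lt_of_lt_of_le hm1pos hM1
  have hU3 : 0 ≤ U3 := by rw [hU3_def]; exact Wn_nonneg hneg 3 h1I
  have hk0sq : kappa0 κ ^ 2 = b := by
    rw [kappa0, omega_eq, ← hb_def, Real.sq_sqrt hbpos.le]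
  have hk0pos : 0 < kappa0 κ := by
    rw [kappa0, omega_eq, ← hb_def]; exact Real.sqrt_pos.mpr hbpos
  have hUD : UniqueDiffOn ℝ (Set.Ioc (0:ℝ) (kappa0 κ)) := uniqueDiffOn_Ioc _ _
  set T := Set.Ioc (0:ℝ) (kappa0 κ) with hT
  obtain ⟨y, hy⟩ : ∃ y : ℝ → ℝ, y = fun ρ => ρ ^ 2 / xs ρ := ⟨_, rfl⟩
  have hyI : ∀ r ∈ T, y r ∈ Set.Icc (0:ℝ) 1 := fun r hr => by
    rw [hy]; exact ⟨(heq r hr).2.1, (heq r hr).2.2⟩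
  have hmaps : Set.MapsTo y T (Set.Icc (0:ℝ) 1) := fun r hr => hyI r hr
  have hxw : ∀ r ∈ T, xs r = Wn κ 1 (y r) := fun r hr => by
    rw [hy, (heq r hr).1, omega_eq]
  have hxa : ∀ r ∈ T, a ≤ xs r := fun r hr => by
    rw [hxw r hr, ha_def]
    exact Wn_mono hα hC hcont hneg hbound (by norm_num) h0I (hyI r hr) (hyI r hr).1
  have hxb : ∀ r ∈ T, xs r ≤ b := fun r hr => by
    rw [hxw r hr, hb_def]
    exact Wn_mono hα hC hcont hneg hbound (by norm_num) (hyI r hr) h1I (hyI r hr).2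
  have hxpos : ∀ r ∈ T, 0 < xs r := fun r hr => lt_of_lt_of_le hapos (hxa r hr)
  have hr2 : ∀ r ∈ T, r ^ 2 = y r * xs r := fun r hr => by
    rw [hy]
    exact (div_mul_cancel₀ _ (ne_of_gt (hxpos r hr))).symm
  have hw1l : ∀ r ∈ T, m1 ≤ Wn κ 2 (y r) := fun r hr => by
    rw [hm1_def]
    exact Wn_mono hα hC hcont hneg hbound (by norm_num) h0I (hyI r hr) (hyI r hr).1
  have hw1u : ∀ r ∈ T, Wn κ 2 (y r) ≤ M1 := fun r hr => by
    rw [hM1_def]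
    exact Wn_mono hα hC hcont hneg hbound (by norm_num) (hyI r hr) h1I (hyI r hr).2
  have hW3l : ∀ r ∈ T, 0 ≤ Wn κ 3 (y r) := fun r hr => Wn_nonneg hneg 3 (hyI r hr)
  have hW3u : ∀ r ∈ T, Wn κ 3 (y r) ≤ U3 := fun r hr => by
    rw [hU3_def]
    exact Wn_mono hα hC hcont hneg hbound (by norm_num) (hyI r hr) h1I (hyI r hr).2
  have hDpos : ∀ r ∈ T, 0 < xs r + y r * Wn κ 2 (y r) := fun r hr => by
    have := hxpos r hr
    have h1 := (hyI r hr).1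
    have h2 := lt_of_lt_of_le hm1pos (hw1l r hr)
    nlinarith
  have hDub : ∀ r ∈ T, xs r + y r * Wn κ 2 (y r) ≤ b + M1 := fun r hr => by
    have h1 := (hyI r hr).1
    have h2 := (hyI r hr).2
    have h3 := hw1u r hr
    have h4 := lt_of_lt_of_le hm1pos (hw1l r hr)
    have h5 := hxb r hr
    nlinarith
  have hDlb : ∀ r ∈ T, a ≤ xs r + y r * Wn κ 2 (y r) := fun r hr => by
    have h1 := (hyI r hr).1
    have h2 := lt_of_lt_of_le hm1pos (hw1l r hr)
    have h3 := hxa r hr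
    nlinarith
  have hy'deriv : ∀ r ∈ T, HasDerivWithinAt y
      ((2 * r * xs r - r ^ 2 * xs' r) / (xs r) ^ 2) T r := by
    intro r hr
    have hp : HasDerivWithinAt (fun ρ : ℝ => ρ ^ 2) (2 * r) T r := by
      simpa using hasDerivWithinAt_pow (s := T) 2 r
    rw [hy]
    exact hp.div (hD1 r hr) (ne_of_gt (hxpos r hr))
  -- first derivative: xs' r * D = 2 r w1
  have hx'prod : ∀ r ∈ T, xs' r * (xs r + y r * Wn κ 2 (y r)) = 2 * r * Wn κ 2 (y r) := by
    intro r hr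
    have hcompderiv : HasDerivWithinAt xs
        (Wn κ 2 (y r) * ((2 * r * xs r - r ^ 2 * xs' r) / (xs r) ^ 2)) T r := by
      have h := (W1_hasDeriv hα hC hcont hbound (hyI r hr)).comp r (hy'deriv r hr) hmaps
      exact h.congr (fun ρ hρ => hxw ρ hρ) (hxw r hr)
    have huniq : xs' r = Wn κ 2 (y r) * ((2 * r * xs r - r ^ 2 * xs' r) / (xs r) ^ 2) :=
      ((hD1 r hr).derivWithin (hUD r hr)).symm.trans (hcompderiv.derivWithin (hUD r hr))
    have hx0 : xs r ≠ 0 := ne_of_gt (hxpos r hr)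
    have hx2 : xs' r * (xs r) ^ 2 = Wn κ 2 (y r) * (2 * r * xs r - r ^ 2 * xs' r) := by
      calc xs' r * (xs r) ^ 2
          = (Wn κ 2 (y r) * ((2 * r * xs r - r ^ 2 * xs' r) / (xs r) ^ 2)) * (xs r) ^ 2 := by
            rw [← huniq]
        _ = Wn κ 2 (y r) * (2 * r * xs r - r ^ 2 * xs' r) := by
            field_simp
    have h3 : xs r * (xs' r * (xs r + y r * Wn κ 2 (y r)))
        = xs r * (2 * r * Wn κ 2 (y r)) := by
      linear_combination hx2 - xs' r * Wn κ 2 (y r) * (hr2 r hr)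
    exact mul_left_cancel₀ hx0 h3
  have hx'val : ∀ r ∈ T, xs' r = 2 * r * Wn κ 2 (y r) / (xs r + y r * Wn κ 2 (y r)) := by
    intro r hr
    rw [eq_div_iff (ne_of_gt (hDpos r hr))]
    exact hx'prod r hr
  -- the simplified y'
  have hy'val : ∀ r ∈ T, (2 * r * xs r - r ^ 2 * xs' r) / (xs r) ^ 2
      = 2 * r / (xs r + y r * Wn κ 2 (y r)) := by
    intro r hr
    have hx0 : xs r ≠ 0 := ne_of_gt (hxpos r hr)
    have hD0 : xs r + y r * Wn κ 2 (y r) ≠ 0 := ne_of_gt (hDpos r hr)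
    rw [div_eq_div_iff (pow_ne_zero 2 hx0) hD0]
    linear_combination (-(r^2))*(hx'prod r hr) - 2*r*Wn κ 2 (y r)*(hr2 r hr)
  -- second derivative
  have hx''form : ∀ r ∈ T, xs'' r =
      2 * Wn κ 2 (y r) / (xs r + y r * Wn κ 2 (y r))
      + 8 * r ^ 2 * (Wn κ 3 (y r) * xs r - Wn κ 2 (y r) ^ 2)
        / (xs r + y r * Wn κ 2 (y r)) ^ 3 := by
    intro r hr
    have hx0 : xs r ≠ 0 := ne_of_gt (hxpos r hr)
    have hD0 : xs r + y r * Wn κ 2 (y r) ≠ 0 := ne_of_gt (hDpos r hr)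
    have hW2y : HasDerivWithinAt (fun ρ => Wn κ 2 (y ρ))
        (2 * Wn κ 3 (y r) * ((2 * r * xs r - r ^ 2 * xs' r) / (xs r) ^ 2)) T r :=
      (W2_hasDeriv hα hC hcont hbound (hyI r hr)).comp r (hy'deriv r hr) hmaps
    have h2ρ : HasDerivWithinAt (fun ρ : ℝ => 2 * ρ) 2 T r := by
      simpa using (hasDerivWithinAt_id r T).const_mul (2:ℝ)
    have hNum := h2ρ.mul hW2y
    have hDen := (hD1 r hr).add ((hy'deriv r hr).mul hW2y)
    have hG := hNum.div hDen hD0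
    have hGxs' : HasDerivWithinAt xs' _ T r :=
      hG.congr (fun ρ hρ => hx'val ρ hρ) (hx'val r hr)
    have hx''eq := ((hD2 r hr).derivWithin (hUD r hr)).symm.trans
      (hGxs'.derivWithin (hUD r hr))
    rw [hx''eq, hy'val r hr, hx'val r hr]
    simp only [Pi.add_apply, Pi.mul_apply]
    generalize hDD : xs r + y r * Wn κ 2 (y r) = D at hD0 ⊢
    field_simp
    linear_combination (-8 * r ^ 2 * Wn κ 3 (y r)) * hDD
  -- Cauchy–Schwarz pointwise
  have hCS : ∀ r ∈ T, Wn κ 2 (y r) ^ 2 ≤ xs r * Wn κ 3 (y r) := fun r hr => by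
    have hpos : 0 < Wn κ 1 (y r) := by rw [← hxw r hr]; exact hxpos r hr
    have h := W_CS hα hC hcont hneg hbound (hyI r hr) hpos
    rw [← hxw r hr] at h
    exact h
  have hbM1 : 0 < b + M1 := by linarith
  obtain ⟨A1, hA1⟩ : ∃ A1, A1 = 2*m1/(b+M1) := ⟨_, rfl⟩
  obtain ⟨A2, hA2⟩ : ∃ A2, A2 = 2*M1/a := ⟨_, rfl⟩
  obtain ⟨A3, hA3⟩ : ∃ A3, A3 = 2*M1/a + 8*(b*(U3*b))/a^3 := ⟨_, rfl⟩
  obtain ⟨c1x, hc1x⟩ : ∃ c1x, c1x = 4*m1*a^2/(b+M1)^2 := ⟨_, rfl⟩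
  have hA1pos : 0 < A1 := by rw [hA1]; exact div_pos (by linarith) (by linarith)
  have hA2pos : 0 < A2 := by rw [hA2]; exact div_pos (by linarith) hapos
  have hA3pos : 0 < A3 := by
    rw [hA3]
    have e1 : 0 < 2*M1/a := div_pos (by linarith) hapos
    have e2 : 0 ≤ 8*(b*(U3*b))/a^3 :=
      div_nonneg (by nlinarith [mul_nonneg hU3 hbpos.le]) (by positivity)
    linarith
  have hc1xpos : 0 < c1x := by
    rw [hc1x]
    exact div_pos (by nlinarith [mul_pos hm1pos (pow_pos hapos 2)]) (by positivity)
  have hrb : ∀ r ∈ T, r ^ 2 ≤ b := fun r hr => by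
    rw [← hk0sq]
    exact pow_le_pow_left₀ (le_of_lt hr.1) hr.2 2
  -- first derivative bounds
  have hx'lb : ∀ r ∈ T, A1 * r ≤ xs' r := by
    intro r hr
    rw [hx'val r hr, hA1]
    rw [show 2*m1/(b+M1)*r = 2*r*m1/(b+M1) by ring]
    have h1 := hDpos r hr
    have h2 := hDub r hr
    have h3 := hw1l r hr
    have h4 : (0:ℝ) < r := hr.1
    gcongr
    nlinarith [hm1pos, h3, h4]
  have hx'ub : ∀ r ∈ T, xs' r ≤ A2 * r := by
    intro r hr
    rw [hx'val r hr, hA2]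
    rw [show 2*M1/a*r = 2*r*M1/a by ring]
    have h1 := hDlb r hr
    have h3 := hw1u r hr
    have h4 : (0:ℝ) < r := hr.1
    gcongr
  -- second derivative bounds
  have hx''lb : ∀ r ∈ T, A1 ≤ xs'' r := by
    intro r hr
    rw [hx''form r hr, hA1]
    have h1 := hDpos r hr
    have h2 := hDub r hr
    have h3 := hw1l r hr
    have hK : 0 ≤ Wn κ 3 (y r) * xs r - Wn κ 2 (y r) ^ 2 := by
      have := hCS r hr; nlinarith
    have hsecond : 0 ≤ 8 * r ^ 2 * (Wn κ 3 (y r) * xs r - Wn κ 2 (y r) ^ 2)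
        / (xs r + y r * Wn κ 2 (y r)) ^ 3 := by
      apply div_nonneg _ (pow_nonneg h1.le 3)
      apply mul_nonneg (by positivity) hK
    have hfirst : 2*m1/(b+M1) ≤ 2 * Wn κ 2 (y r) / (xs r + y r * Wn κ 2 (y r)) := by
      gcongr
      nlinarith [hm1pos, h3]
    linarith
  have hx''ub : ∀ r ∈ T, xs'' r ≤ A3 := by
    intro r hr
    rw [hx''form r hr, hA3]
    have h1 := hDpos r hr
    have h2 := hDlb r hr
    have h3 := hw1u r hr
    have h5 := hW3l r hr
    have h6 := hW3u r hr
    have h7 := hxa r hr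
    have h8 := hxb r hr
    have h9 := hrb r hr
    have hfirst : 2 * Wn κ 2 (y r) / (xs r + y r * Wn κ 2 (y r)) ≤ 2*M1/a := by
      gcongr
    have hK : 0 ≤ Wn κ 3 (y r) * xs r - Wn κ 2 (y r) ^ 2 := by
      have := hCS r hr; nlinarith
    have hsecond : 8 * r ^ 2 * (Wn κ 3 (y r) * xs r - Wn κ 2 (y r) ^ 2)
        / (xs r + y r * Wn κ 2 (y r)) ^ 3 ≤ 8*(b*(U3*b))/a^3 := by
      apply div_le_div₀ (by nlinarith [mul_nonneg hU3 hbpos.le, hbpos]) _ (by positivity)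
        (pow_le_pow_left₀ hapos.le h2 3)
      have t1 : Wn κ 3 (y r) * xs r - Wn κ 2 (y r) ^ 2 ≤ U3 * b := by
        nlinarith [sq_nonneg (Wn κ 2 (y r))]
      have t2 : r^2 * (Wn κ 3 (y r) * xs r - Wn κ 2 (y r) ^ 2) ≤ b * (U3 * b) := by
        have := mul_le_mul h9 t1 hK hbpos.le
        linarith [this]
      linarith [t2]
    linarith
  -- lower bound for the Hessian quantity
  have hiii : ∀ r ∈ T, c1x ≤ 2 * xs'' r * xs r - xs' r ^ 2 := by
    intro r hr
    have hD := hDpos r hr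
    have hDu := hDub r hr
    have hDl := hDlb r hr
    have hx := hxpos r hr
    have hxA := hxa r hr
    have h3 := hw1l r hr
    have hK : 0 ≤ Wn κ 3 (y r) * xs r - Wn κ 2 (y r) ^ 2 := by
      have := hCS r hr; nlinarith
    have hkey : xs r * (xs r + y r * Wn κ 2 (y r)) - r^2 * Wn κ 2 (y r) = xs r ^ 2 := by
      linear_combination (-(Wn κ 2 (y r)))*(hr2 r hr)
    have hq : xs' r ^ 2 * (xs r + y r * Wn κ 2 (y r)) ^ 2 = 4 * r^2 * Wn κ 2 (y r)^2 := by
      have h := hx'prod r hr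
      linear_combination (xs' r * (xs r + y r * Wn κ 2 (y r)) + 2*r*Wn κ 2 (y r)) * h
    have hxx : xs'' r * (xs r + y r * Wn κ 2 (y r)) ^ 3
        = 2 * Wn κ 2 (y r) * (xs r + y r * Wn κ 2 (y r)) ^ 2
          + 8 * r ^ 2 * (Wn κ 3 (y r) * xs r - Wn κ 2 (y r) ^ 2) := by
      rw [hx''form r hr]
      field_simp
      exact mul_div_cancel_left₀ _ (by rw [mul_comm]; exact ne_of_gt hD)
    have hSD3 : (2 * xs'' r * xs r - xs' r ^ 2) * (xs r + y r * Wn κ 2 (y r)) ^ 3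
        = 4 * Wn κ 2 (y r) * (xs r + y r * Wn κ 2 (y r)) * xs r ^ 2
          + 16 * r ^ 2 * xs r * (Wn κ 3 (y r) * xs r - Wn κ 2 (y r) ^ 2) := by
      linear_combination 2 * xs r * hxx
        - (xs r + y r * Wn κ 2 (y r)) * hq
        + 4 * Wn κ 2 (y r) * (xs r + y r * Wn κ 2 (y r)) * hkey
    have hstep : c1x * (xs r + y r * Wn κ 2 (y r)) ^ 3
        ≤ (2 * xs'' r * xs r - xs' r ^ 2) * (xs r + y r * Wn κ 2 (y r)) ^ 3 := by
      rw [hSD3, hc1x]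
      have hDsq : (xs r + y r * Wn κ 2 (y r))^2 ≤ (b+M1)^2 :=
        pow_le_pow_left₀ hD.le hDu 2
      have hcpos : 0 < 4*m1*a^2*(xs r + y r * Wn κ 2 (y r)) := by
        linarith [mul_pos (mul_pos hm1pos (pow_pos hapos 2)) hD]
      have e1 : 4*m1*a^2/(b+M1)^2 * (xs r + y r * Wn κ 2 (y r)) ^ 3
          ≤ 4*m1*a^2 * (xs r + y r * Wn κ 2 (y r)) := by
        rw [div_mul_eq_mul_div, div_le_iff₀ (by positivity)]
        linarith [mul_le_mul_of_nonneg_left hDsq hcpos.le]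
      have hma : m1*a^2 ≤ Wn κ 2 (y r) * xs r ^ 2 :=
        mul_le_mul h3 (pow_le_pow_left₀ hapos.le hxA 2) (pow_nonneg hapos.le 2)
          (by linarith [hm1pos, h3])
      have e2 : 4*m1*a^2 * (xs r + y r * Wn κ 2 (y r))
          ≤ 4 * Wn κ 2 (y r) * (xs r + y r * Wn κ 2 (y r)) * xs r ^ 2 := by
        linarith [mul_le_mul_of_nonneg_right hma hD.le]
      linarith [e1, e2, mul_nonneg (mul_nonneg (by positivity : (0:ℝ) ≤ 16 * r^2) hx.le) hK]
    exact le_of_mul_le_mul_right hstep (by positivity)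
  -- square-root facts
  obtain ⟨sa, hsa_def⟩ : ∃ sa, sa = Real.sqrt a := ⟨_, rfl⟩
  obtain ⟨sb, hsb_def⟩ : ∃ sb, sb = Real.sqrt b := ⟨_, rfl⟩
  have hsapos : 0 < sa := by rw [hsa_def]; exact Real.sqrt_pos.mpr hapos
  have hsbpos : 0 < sb := by rw [hsb_def]; exact Real.sqrt_pos.mpr hbpos
  -- choose constants
  refine ⟨A1/(2*sb), max (max A2 A3) (max A1⁻¹ (A2/(2*sa))), min c1x (c1x/(4*b*sb)),
    div_pos hA1pos (by linarith), ?_, ?_, ?_, ?_⟩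
  · exact lt_of_lt_of_le hA2pos ((le_max_left A2 A3).trans (le_max_left _ _))
  · exact lt_min hc1xpos (div_pos hc1xpos (by nlinarith [mul_pos hbpos hsbpos]))
  · -- main bounds for xs
    intro r hr
    set C₀ := max (max A2 A3) (max A1⁻¹ (A2/(2*sa))) with hC₀
    have hC₀A2 : A2 ≤ C₀ := (le_max_left A2 A3).trans (le_max_left _ _)
    have hC₀A3 : A3 ≤ C₀ := (le_max_right A2 A3).trans (le_max_left _ _)
    have hC₀inv : C₀⁻¹ ≤ A1 := by
      have h1 : A1⁻¹ ≤ C₀ := (le_max_left A1⁻¹ _).trans (le_max_right _ _)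
      have h2 : 0 < A1⁻¹ := inv_pos.mpr hA1pos
      calc C₀⁻¹ ≤ (A1⁻¹)⁻¹ := by
            apply inv_anti₀ h2 h1
        _ = A1 := inv_inv A1
    refine ⟨?_, ?_, ?_, ?_, ?_⟩
    · calc C₀⁻¹ * r ≤ A1 * r := mul_le_mul_of_nonneg_right hC₀inv (le_of_lt hr.1)
        _ ≤ xs' r := hx'lb r hr
    · calc xs' r ≤ A2 * r := hx'ub r hr
        _ ≤ C₀ * r := mul_le_mul_of_nonneg_right hC₀A2 (le_of_lt hr.1)
    · exact le_trans hC₀inv (hx''lb r hr)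
    · exact le_trans (hx''ub r hr) hC₀A3
    · exact le_trans (min_le_left _ _) (hiii r hr)
  · -- the τ* part
    refine ⟨fun ρ => xs' ρ / (2 * Real.sqrt (xs ρ)),
      fun ρ => (2 * xs'' ρ * xs ρ - xs' ρ ^ 2) / (4 * xs ρ * Real.sqrt (xs ρ)), ?_⟩
    intro r hr
    have hx := hxpos r hr
    have hsx : 0 < Real.sqrt (xs r) := Real.sqrt_pos.mpr hx
    have hss : Real.sqrt (xs r) ^ 2 = xs r := Real.sq_sqrt hx.le
    have hsxb : Real.sqrt (xs r) ≤ sb := by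
      rw [hsb_def]; exact Real.sqrt_le_sqrt (hxb r hr)
    have hsxa : sa ≤ Real.sqrt (xs r) := by
      rw [hsa_def]; exact Real.sqrt_le_sqrt (hxa r hr)
    have h1 : HasDerivWithinAt (fun ρ => Real.sqrt (xs ρ))
        (xs' r / (2 * Real.sqrt (xs r))) T r := (hD1 r hr).sqrt (ne_of_gt hx)
    have h2 : HasDerivWithinAt (fun ρ => xs' ρ / (2 * Real.sqrt (xs ρ)))
        ((xs'' r * (2 * Real.sqrt (xs r)) - xs' r * (2 * (xs' r / (2 * Real.sqrt (xs r)))))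
          / (2 * Real.sqrt (xs r)) ^ 2) T r :=
      (hD2 r hr).div (h1.const_mul 2) (ne_of_gt (by linarith : (0:ℝ) < 2 * Real.sqrt (xs r)))
    have hval : (xs'' r * (2 * Real.sqrt (xs r)) - xs' r * (2 * (xs' r / (2 * Real.sqrt (xs r)))))
          / (2 * Real.sqrt (xs r)) ^ 2
        = (2 * xs'' r * xs r - xs' r ^ 2) / (4 * xs r * Real.sqrt (xs r)) := by
      set s := Real.sqrt (xs r) with hs
      rw [← hss]
      have hs0 : s ≠ 0 := ne_of_gt hsx
      field_simp
      ring
    rw [hval] at h2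
    have hx'l := hx'lb r hr
    have hx'u := hx'ub r hr
    have hx'nn : 0 ≤ xs' r := le_trans (mul_nonneg hA1pos.le hr.1.le) hx'l
    have hCnum := hiii r hr
    set C₀ := max (max A2 A3) (max A1⁻¹ (A2/(2*sa))) with hC₀
    have hC₀ts : A2/(2*sa) ≤ C₀ := (le_max_right A1⁻¹ _).trans (le_max_right _ _)
    refine ⟨h1, h2, ?_, ?_, ?_⟩
    · rw [show A1/(2*sb)*r = A1*r/(2*sb) by ring]
      exact div_le_div₀ hx'nn hx'l (by linarith) (by linarith)
    · have : xs' r / (2 * Real.sqrt (xs r)) ≤ A2 * r / (2*sa) :=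
        div_le_div₀ (mul_nonneg hA2pos.le hr.1.le) hx'u (by linarith) (by linarith)
      calc xs' r / (2 * Real.sqrt (xs r)) ≤ A2 * r / (2*sa) := this
        _ = (A2/(2*sa)) * r := by ring
        _ ≤ C₀ * r := mul_le_mul_of_nonneg_right hC₀ts (le_of_lt hr.1)
    · have hden : 4 * xs r * Real.sqrt (xs r) ≤ 4 * b * sb := by
        have := hxb r hr
        nlinarith [hsx, hsxb, hx]
      calc min c1x (c1x/(4*b*sb)) ≤ c1x/(4*b*sb) := min_le_right _ _
        _ ≤ (2 * xs'' r * xs r - xs' r ^ 2) / (4 * xs r * Real.sqrt (xs r)) :=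
            div_le_div₀ (show (0:ℝ) ≤ 2 * xs'' r * xs r - xs' r ^ 2 by
                linarith [hCnum, hc1xpos]) hCnum
              (by nlinarith [hx, hsx]) hden
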